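/- For every monotone function f : Ω → Ω and all countable ordinals α and γ, iterating the iterate corresponds to ordinal multiplication: Iter_α (Iter_γ f) β = Iter_{γ·α} f β for every β ∈ Ω (where γ·α is ordinal multiplication). -/

import Mathlib

/-!  Framework: finite type structure over Ω = countable ordinals,
     limsup/liminf, transfinite iteration functionals, hereditarily
     positive and hereditarily monotone functionals. -/

noncomputable section
namespace IterOrd

open Ordinal

theorem omega1_pos : (0 : Ordinal) < ω₁ := Ordinal.omega0_pos.trans Ordinal.omega0_lt_omega_one

/-- `Om` is Ω, the set of countable ordinals (ordinals `< ω₁`). -/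
abbrev Om : Type 1 := {o : Ordinal // o < ω₁}

/-- Infimum of a subset of Ω (the minimum for nonempty sets; `0` for `∅`). -/
def infOm (s : Set Om) : Om :=
  ⟨sInf (Subtype.val '' s), by
    rcases (Subtype.val '' s).eq_empty_or_nonempty with h | h
    · rw [h]; simpa using omega1_pos
    · obtain ⟨x, _, he⟩ := csInf_mem h
      exact he ▸ x.2⟩

/-- Supremum of a subset of Ω.  Whenever the supremum of the set exists in Ω
(in particular for every countable subset, by regularity of `ω₁`) this is the
genuine supremum; otherwise it takes a junk value. -/
def supOm (s : Set Om) : Om :=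
  if h : sSup (Subtype.val '' s) < ω₁ then ⟨sSup (Subtype.val '' s), h⟩ else ⟨0, omega1_pos⟩

/-- Finite types over the base type `o` (interpreted as Ω). -/
inductive Ty : Type
  | base : Ty
  | arrow : Ty → Ty → Ty
deriving DecidableEq

/-- The full type structure over Ω: `El base = Ω` and
`El (arrow σ τ)` is the set of all functions `El σ → El τ`. -/
@[reducible] def El : Ty → Type 1
  | .base => Om
  | .arrow σ τ => El σ → El τ

/-- The order on each `El σ`: the ordinal order at base type, pointwise at arrow types. -/
def Le : (σ : Ty) → El σ → El σ → Prop
  | .base => fun x y => x ≤ y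
  | .arrow σ τ => fun f g => ∀ x : El σ, Le τ (f x) (g x)

/-- Suprema, computed pointwise at function types. -/
def supEl : (σ : Ty) → Set (El σ) → El σ
  | .base => supOm
  | .arrow σ τ => fun S (x : El σ) => supEl τ ((fun f : El (.arrow σ τ) => f x) '' S)

/-- Infima, computed pointwise at function types. -/
def infEl : (σ : Ty) → Set (El σ) → El σ
  | .base => infOm
  | .arrow σ τ => fun S (x : El σ) => infEl τ ((fun f : El (.arrow σ τ) => f x) '' S)

/-- `limsup_{ξ→ζ} f ξ = inf_{γ<ζ} sup_{γ≤ξ<ζ} f ξ`. -/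
def limsupEl (σ : Ty) (ζ : Ordinal) (f : ∀ ξ : Ordinal, ξ < ζ → El σ) : El σ :=
  infEl σ {y | ∃ γ, ∃ _ : γ < ζ, y = supEl σ {z | ∃ ξ, ∃ h : ξ < ζ, γ ≤ ξ ∧ z = f ξ h}}

/-- `liminf_{ξ→ζ} f ξ = sup_{γ<ζ} inf_{γ≤ξ<ζ} f ξ`. -/
def liminfEl (σ : Ty) (ζ : Ordinal) (f : ∀ ξ : Ordinal, ξ < ζ → El σ) : El σ :=
  supEl σ {y | ∃ γ, ∃ _ : γ < ζ, y = infEl σ {z | ∃ ξ, ∃ h : ξ < ζ, γ ≤ ξ ∧ z = f ξ h}}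

/-- `limsup` of a ζ-indexed sequence of ordinals. -/
def oLimsup (ζ : Ordinal) (a : Ordinal → Ordinal) : Ordinal :=
  sInf {s | ∃ γ, γ < ζ ∧ s = sSup (a '' {ξ | γ ≤ ξ ∧ ξ < ζ})}

/-- `liminf` of a ζ-indexed sequence of ordinals. -/
def oLiminf (ζ : Ordinal) (a : Ordinal → Ordinal) : Ordinal :=
  sSup {s | ∃ γ, γ < ζ ∧ s = sInf (a '' {ξ | γ ≤ ξ ∧ ξ < ζ})}

/-- The α-iteration functional of type σ:
`Iter 0 f x = x`, `Iter (α+1) f x = f (Iter α f x)`, and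
`Iter μ f x = limsup_{ξ→μ} Iter ξ f x` for limit μ. -/
def Iter (σ : Ty) (α : Ordinal) : (El σ → El σ) → El σ → El σ :=
  Ordinal.limitRecOn (motive := fun _ => (El σ → El σ) → El σ → El σ) α
    (fun _ x => x)
    (fun _ ih f x => f (ih f x))
    (fun μ _ ih f x => limsupEl σ μ (fun ξ h => ih ξ h f x))

/-- The pair (hereditarily positive, ≤hp), defined simultaneously by recursion on the type.
Every element of `Ω` and of `Ω_{ρ→τ}` with `ρ ≠ τ` is h.p., and `≤hp` there is `≤`;
`f : Ω_{τ→τ}` is h.p. iff it preserves h.p., is inflationary on h.p. arguments and is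
monotone (w.r.t. `≤hp`) on h.p. arguments; `f ≤hp f'` on `Ω_{τ→τ}` iff `f x ≤hp f' x`
for every h.p. `x`. -/
def HPaux : (σ : Ty) → (El σ → Prop) × (El σ → El σ → Prop)
  | .base => ⟨fun _ => True, fun x y => x ≤ y⟩
  | .arrow ρ τ =>
      ⟨fun f =>
        if h : ρ = τ then
          (∀ x, (HPaux ρ).1 x → (HPaux τ).1 (f x)) ∧
          (∀ x, (HPaux ρ).1 x → (HPaux τ).2 (cast (congrArg El h) x) (f x)) ∧
          (∀ x y, (HPaux ρ).1 x → (HPaux ρ).1 y → (HPaux ρ).2 x y → (HPaux τ).2 (f x) (f y))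
        else True,
       fun f g =>
        if ρ = τ then ∀ x, (HPaux ρ).1 x → (HPaux τ).2 (f x) (g x)
        else Le (.arrow ρ τ) f g⟩

/-- Hereditarily positive functionals. -/
def Hp (σ : Ty) : El σ → Prop := (HPaux σ).1

/-- The order `≤hp`. -/
def HpLe (σ : Ty) : El σ → El σ → Prop := (HPaux σ).2

/-- `f =hp g` iff `f ≤hp g` and `g ≤hp f`. -/
def HpEq (σ : Ty) (f g : El σ) : Prop := HpLe σ f g ∧ HpLe σ g f

/-- The pair (hereditarily monotone, ≤ on the hereditarily monotone structure),
by recursion on the type.  `f` is hereditarily monotone iff it maps hereditarily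
monotone arguments to hereditarily monotone values, monotonically; the order is
pointwise over hereditarily monotone arguments (i.e. the order of `Ω^mon`). -/
def HMaux : (σ : Ty) → (El σ → Prop) × (El σ → El σ → Prop)
  | .base => ⟨fun _ => True, fun x y => x ≤ y⟩
  | .arrow σ τ =>
      ⟨fun f =>
        (∀ x, (HMaux σ).1 x → (HMaux τ).1 (f x)) ∧
        (∀ x y, (HMaux σ).1 x → (HMaux σ).1 y → (HMaux σ).2 x y → (HMaux τ).2 (f x) (f y)),
       fun f g => ∀ x, (HMaux σ).1 x → (HMaux τ).2 (f x) (g x)⟩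

/-- Hereditarily monotone functionals: the members of the type structure `Ω^mon`. -/
def HM (σ : Ty) : El σ → Prop := (HMaux σ).1

/-- The (pointwise) order of the hereditarily monotone type structure `Ω^mon`. -/
def LeHM (σ : Ty) : El σ → El σ → Prop := (HMaux σ).2

/-- Equality in the hereditarily monotone type structure `Ω^mon`. -/
def EqHM (σ : Ty) (f g : El σ) : Prop := LeHM σ f g ∧ LeHM σ g f

/-! If `β ≤ f β` the iterates `Iter ξ f β` increase with `ξ`, and if `f β ≤ β` they decrease
(monotonicity of `f` propagates the first step, and limits preserve the direction). In either
case the limsup at a limit stage is the supremum, resp. infimum, of the earlier stages, so it does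
not change when the earlier stages are replaced by a cofinal subfamily. As `a + ξ` (`ξ < b`) is
cofinal in `a + b` and `γ * ξ` (`ξ < α`) is cofinal in `γ * α`, transfinite induction gives first
`Iter b f (Iter a f β) = Iter (a + b) f β` and then the theorem. Countability is what makes the
suprema of increasing stages exist in `Ω`. -/

open Set

lemma countable_Iio_of_lt_omega_one {ζ : Ordinal} (hζ : ζ < ω₁) : (Iio ζ).Countable := by
  rwa [← Cardinal.le_aleph0_iff_set_countable, Cardinal.mk_Iio_ordinal, Cardinal.lift_le_aleph0,
    ← Cardinal.lt_aleph_one_iff, ← Cardinal.lt_omega_iff_card_lt]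

lemma isGLB_infOm {T : Set Om} (hT : T.Nonempty) : IsGLB T (infOm T) :=
  ⟨fun x hx => show sInf _ ≤ x.1 from csInf_le' (mem_image_of_mem _ hx),
    fun b hb => show b.1 ≤ sInf _ from le_csInf (hT.image _) (forall_mem_image.2 fun _ hx => hb hx)⟩

lemma isLUB_supOm {T : Set Om} (hT : T.Countable) (hne : T.Nonempty) : IsLUB T (supOm T) := by
  have hlt : sSup (Subtype.val '' T) < ω₁ := by
    have := hT.to_subtype
    rw [sSup_image']
    exact iSup_lt_omega_one fun x => x.1.2
  have hbdd : BddAbove (Subtype.val '' T) := ⟨ω₁, forall_mem_image.2 fun x _ => x.2.le⟩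
  rw [supOm, dif_pos hlt]
  exact ⟨fun x hx => show x.1 ≤ sSup _ from le_csSup hbdd (mem_image_of_mem _ hx),
    fun b hb => show sSup _ ≤ b.1 from
      csSup_le (hne.image _) (forall_mem_image.2 fun _ hx => hb hx)⟩

lemma supOm_eq_of_isGreatest {T : Set Om} {x : Om} (h : IsGreatest T x) : supOm T = x := by
  have hs : sSup (Subtype.val '' T) = x.1 := (Subtype.mono_coe _ |>.map_isGreatest h).csSup_eq
  rw [supOm, dif_pos (hs ▸ x.2)]
  exact Subtype.ext hs

lemma limsupEl_base_eq (ζ : Ordinal) (s : Ordinal → Om) :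
    limsupEl .base ζ (fun ξ _ => s ξ) =
      infOm ((fun γ => supOm (s '' Ico γ ζ)) '' Iio ζ) := by
  have tail (γ : Ordinal) : {z | ∃ ξ, ∃ _ : ξ < ζ, γ ≤ ξ ∧ z = s ξ} = s '' Ico γ ζ := by
    ext; simp [eq_comm, and_assoc]
  simp only [limsupEl, infEl, supEl, tail]
  congr 1
  ext; simp [eq_comm]

lemma limsupEl_isLUB_of_monotoneOn {ζ : Ordinal} (hζ : ζ < ω₁) (hζ0 : ζ ≠ 0) {s : Ordinal → Om}
    (hs : MonotoneOn s (Iio ζ)) : IsLUB (s '' Iio ζ) (limsupEl .base ζ fun ξ _ => s ξ) := by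
  have hpos : (0 : Ordinal) < ζ := pos_iff_ne_zero.2 hζ0
  have hL := isLUB_supOm ((countable_Iio_of_lt_omega_one hζ).image s)
    ⟨_, mem_image_of_mem s (mem_Iio.2 hpos)⟩
  have tail : ∀ γ ∈ Iio ζ, supOm (s '' Ico γ ζ) = supOm (s '' Iio ζ) := by
    intro γ hγ
    refine (isLUB_supOm (((countable_Iio_of_lt_omega_one hζ).mono Ico_subset_Iio_self).image s)
      ⟨_, mem_image_of_mem s ⟨le_rfl, hγ⟩⟩).unique
      (hL.of_isCofinalFor (image_mono Ico_subset_Iio_self) ?_)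
    rintro _ ⟨ξ, hξ, rfl⟩
    exact ⟨s (max γ ξ), mem_image_of_mem s ⟨le_max_left _ _, max_lt hγ hξ⟩,
      hs hξ (mem_Iio.2 (max_lt hγ hξ)) (le_max_right _ _)⟩
  have h_inf : infOm {supOm (s '' Iio ζ)} = supOm (s '' Iio ζ) :=
    (isGLB_infOm (singleton_nonempty _)).unique isGLB_singleton
  rwa [limsupEl_base_eq, image_congr tail,
    (show (Iio ζ).Nonempty from ⟨0, hpos⟩).image_const, h_inf]

lemma limsupEl_isGLB_of_antitoneOn {ζ : Ordinal} (hζ0 : ζ ≠ 0) {s : Ordinal → Om}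
    (hs : AntitoneOn s (Iio ζ)) : IsGLB (s '' Iio ζ) (limsupEl .base ζ fun ξ _ => s ξ) := by
  have tail : ∀ γ ∈ Iio ζ, supOm (s '' Ico γ ζ) = s γ := fun γ hγ =>
    supOm_eq_of_isGreatest ⟨mem_image_of_mem s ⟨le_rfl, hγ⟩,
      forall_mem_image.2 fun ξ hξ => hs hγ hξ.2 hξ.1⟩
  rw [limsupEl_base_eq, image_congr tail]
  exact isGLB_infOm (⟨_, mem_image_of_mem s (mem_Iio.2 (pos_iff_ne_zero.2 hζ0))⟩)

lemma limsupEl_const {ζ : Ordinal} (hζ0 : ζ ≠ 0) (x : Om) :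
    limsupEl .base ζ (fun _ _ => x) = x := by
  have h := limsupEl_isGLB_of_antitoneOn hζ0 (s := fun _ => x) antitoneOn_const
  rw [(show (Iio ζ).Nonempty from ⟨0, pos_iff_ne_zero.2 hζ0⟩).image_const] at h
  exact h.unique isGLB_singleton

lemma iter_zero (σ : Ty) (f : El σ → El σ) (x : El σ) : Iter σ 0 f x = x := by
  rw [Iter, limitRecOn_zero]

lemma iter_add_one (σ : Ty) (α : Ordinal) (f : El σ → El σ) (x : El σ) :
    Iter σ (α + 1) f x = f (Iter σ α f x) := by
  rw [Iter, limitRecOn_add_one]; rfl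

lemma iter_limit (σ : Ty) {μ : Ordinal} (hμ : Order.IsSuccLimit μ) (f : El σ → El σ) (x : El σ) :
    Iter σ μ f x = limsupEl σ μ (fun ξ _ => Iter σ ξ f x) := by
  rw [Iter, limitRecOn_limit _ _ _ _ hμ]; rfl

section Iteration

variable {f : Om → Om} {β : Om}

lemma monotoneOn_iter_of_le_apply (hf : Monotone f) (hβ : β ≤ f β) :
    MonotoneOn (fun ξ => Iter .base ξ f β) (Iio ω₁) := by
  suffices H : ∀ a < ω₁, (∀ a' ≤ a, Iter .base a' f β ≤ Iter .base a f β) ∧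
      Iter .base a f β ≤ f (Iter .base a f β) from
    fun a' _ a ha h => (H a ha).1 a' h
  intro a
  induction a using Ordinal.limitRecOn with
  | zero =>
    intro _
    refine ⟨fun a' ha' => by rw [nonpos_iff_eq_zero.1 ha'], ?_⟩
    rw [iter_zero]; exact hβ
  | add_one b ih =>
    intro hb
    obtain ⟨ih_mono, ih_le⟩ := ih ((lt_add_one b).trans hb)
    rw [iter_add_one]
    refine ⟨fun a' ha' => ?_, hf ih_le⟩
    rcases ha'.lt_or_eq with h | rfl
    · exact (ih_mono a' (Order.lt_add_one_iff.1 h)).trans ih_le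
    · rw [iter_add_one]
  | limit μ hμ ih =>
    intro hμω
    have hL : IsLUB ((fun ξ => Iter .base ξ f β) '' Iio μ) (Iter .base μ f β) := by
      rw [iter_limit _ hμ]
      exact limsupEl_isLUB_of_monotoneOn hμω hμ.ne_bot
        fun ξ _ η hη h => (ih η hη (hη.trans hμω)).1 ξ h
    refine ⟨fun a' ha' => ?_, hL.2 (forall_mem_image.2 fun ξ hξ => ?_)⟩
    · rcases ha'.lt_or_eq with h | rfl
      · exact hL.1 (mem_image_of_mem _ h)
      · exact le_rfl
    · exact (ih ξ hξ (hξ.trans hμω)).2.trans (hf (hL.1 (mem_image_of_mem _ hξ)))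

lemma antitoneOn_iter_of_apply_le (hf : Monotone f) (hβ : f β ≤ β) :
    AntitoneOn (fun ξ => Iter .base ξ f β) (Iio ω₁) := by
  suffices H : ∀ a < ω₁, (∀ a' ≤ a, Iter .base a f β ≤ Iter .base a' f β) ∧
      f (Iter .base a f β) ≤ Iter .base a f β from
    fun a' _ a ha h => (H a ha).1 a' h
  intro a
  induction a using Ordinal.limitRecOn with
  | zero =>
    intro _
    refine ⟨fun a' ha' => by rw [nonpos_iff_eq_zero.1 ha'], ?_⟩
    rw [iter_zero]; exact hβ
  | add_one b ih =>
    intro hb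
    obtain ⟨ih_anti, ih_le⟩ := ih ((lt_add_one b).trans hb)
    rw [iter_add_one]
    refine ⟨fun a' ha' => ?_, hf ih_le⟩
    rcases ha'.lt_or_eq with h | rfl
    · exact ih_le.trans (ih_anti a' (Order.lt_add_one_iff.1 h))
    · rw [iter_add_one]
  | limit μ hμ ih =>
    intro hμω
    have hL : IsGLB ((fun ξ => Iter .base ξ f β) '' Iio μ) (Iter .base μ f β) := by
      rw [iter_limit _ hμ]
      exact limsupEl_isGLB_of_antitoneOn hμ.ne_bot
        fun ξ _ η hη h => (ih η hη (hη.trans hμω)).1 ξ h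
    refine ⟨fun a' ha' => ?_, hL.2 (forall_mem_image.2 fun ξ hξ => ?_)⟩
    · rcases ha'.lt_or_eq with h | rfl
      · exact hL.1 (mem_image_of_mem _ h)
      · exact le_rfl
    · exact (hf (hL.1 (mem_image_of_mem _ hξ))).trans (ih ξ hξ (hξ.trans hμω)).2

lemma limsupEl_iter_comp_eq_iter (hf : Monotone f) {ζ μ : Ordinal}
    (hζ0 : ζ ≠ 0) (hζω : ζ < ω₁) (hμ : Order.IsSuccLimit μ) (hμω : μ < ω₁)
    {e : Ordinal → Ordinal} (he : MonotoneOn e (Iio ζ)) (he_maps : MapsTo e (Iio ζ) (Iio μ))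
    (he_cofinal : ∀ η < μ, ∃ ξ < ζ, η ≤ e ξ) :
    limsupEl .base ζ (fun ξ _ => Iter .base (e ξ) f β) = Iter .base μ f β := by
  set s := fun ξ => Iter .base ξ f β
  have hsub : s '' (e '' Iio ζ) ⊆ s '' Iio μ := image_mono he_maps.image_subset
  have hμsub : Iio μ ⊆ Iio ω₁ := Iio_subset_Iio hμω.le
  rcases le_total β (f β) with hβ | hβ
  · have hs := (monotoneOn_iter_of_le_apply hf hβ).mono hμsub
    have hμ_lub : IsLUB (s '' Iio μ) (Iter .base μ f β) := by
      rw [iter_limit _ hμ]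
      exact limsupEl_isLUB_of_monotoneOn hμω hμ.ne_bot hs
    refine (limsupEl_isLUB_of_monotoneOn hζω hζ0 (hs.comp he he_maps)).unique ?_
    rw [image_comp]
    refine hμ_lub.of_isCofinalFor hsub ?_
    rintro _ ⟨η, hη, rfl⟩
    obtain ⟨ξ, hξ, hle⟩ := he_cofinal η hη
    exact ⟨_, mem_image_of_mem _ (mem_image_of_mem e hξ), hs hη (he_maps hξ) hle⟩
  · have hs := (antitoneOn_iter_of_apply_le hf hβ).mono hμsub
    have hμ_glb : IsGLB (s '' Iio μ) (Iter .base μ f β) := by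
      rw [iter_limit _ hμ]
      exact limsupEl_isGLB_of_antitoneOn hμ.ne_bot hs
    refine (limsupEl_isGLB_of_antitoneOn hζ0 (hs.comp_MonotoneOn he he_maps)).unique ?_
    rw [image_comp]
    refine hμ_glb.of_isCoinitialFor hsub ?_
    rintro _ ⟨η, hη, rfl⟩
    obtain ⟨ξ, hξ, hle⟩ := he_cofinal η hη
    exact ⟨_, mem_image_of_mem _ (mem_image_of_mem e hξ), hs hη (he_maps hξ) hle⟩

lemma iter_iter_eq_iter_add (hf : Monotone f) {a b : Ordinal} (ha : a < ω₁) (hb : b < ω₁) :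
    Iter .base b f (Iter .base a f β) = Iter .base (a + b) f β := by
  induction b using Ordinal.limitRecOn with
  | zero => rw [iter_zero, add_zero]
  | add_one c ih => rw [iter_add_one, ih ((lt_add_one c).trans hb), ← add_assoc, iter_add_one]
  | limit μ hμ ih =>
    rw [iter_limit _ hμ]
    calc limsupEl .base μ (fun ξ _ => Iter .base ξ f (Iter .base a f β))
        = limsupEl .base μ (fun ξ _ => Iter .base (a + ξ) f β) := by
          congr 1; funext ξ hξ; exact ih ξ hξ (hξ.trans hb)
      _ = Iter .base (a + μ) f β :=
          limsupEl_iter_comp_eq_iter hf hμ.ne_bot hb (isSuccLimit_add a hμ)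
            (isPrincipal_add_omega 1 ha hb)
            (fun _ _ _ _ h => by gcongr) (fun _ h => (add_lt_add_iff_left a).2 h)
            (fun _ hη => (lt_add_iff hμ.ne_bot).1 hη)

end Iteration

/-- For every monotone `f : Ω → Ω` and all countable ordinals `α`, `γ`,
`Iter_α (Iter_γ f) β = Iter_{γ·α} f β` for every `β ∈ Ω`. -/
theorem iter_iter_eq_iter_mul (f : Om → Om) (hf : Monotone f)
    (α γ : Ordinal) (hα : α < ω₁) (hγ : γ < ω₁) (β : Om) :
    Iter .base α (Iter .base γ f) β = Iter .base (γ * α) f β := by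
  induction α using Ordinal.limitRecOn with
  | zero => rw [iter_zero, mul_zero, iter_zero]
  | add_one c ih =>
    have hc := (lt_add_one c).trans hα
    rw [iter_add_one, ih hc, mul_add_one,
      iter_iter_eq_iter_add hf (isPrincipal_mul_omega 1 hγ hc) hγ]
  | limit μ hμ ih =>
    rw [iter_limit _ hμ]
    have h_ih : limsupEl .base μ (fun ξ _ => Iter .base ξ (Iter .base γ f) β) =
        limsupEl .base μ (fun ξ _ => Iter .base (γ * ξ) f β) := by
      congr 1; funext ξ hξ; exact ih ξ hξ (hξ.trans hα)
    rw [h_ih]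
    rcases eq_or_ne γ 0 with rfl | hγ0
    · simp only [zero_mul, iter_zero]
      exact limsupEl_const hμ.ne_bot β
    · have hγ_pos := pos_iff_ne_zero.2 hγ0
      exact limsupEl_iter_comp_eq_iter hf hμ.ne_bot hα (isSuccLimit_mul_right hγ_pos hμ)
        (isPrincipal_mul_omega 1 hγ hα) (fun _ _ _ _ h => by gcongr)
        (fun _ h => mul_lt_mul_of_pos_left h hγ_pos)
        (fun _ hη => ((lt_mul_iff_of_isSuccLimit hμ).1 hη).imp fun _ h => ⟨h.1, h.2.le⟩)

end IterOrd
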